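/- arXiv:1703.09669 — 2 statements merged into one kernel-verified Lean document; each statement's English description precedes it below -/
import Mathlib

section
/- The lex-optimal ratios are sharing-equilibrium ratios: if r* ∈ A is lex-optimal, then there exists an allocation d : N × N → ℝ with d_{ij} ≥ 0, d_{ij} = 0 whenever (i,j) ∉ E, Σ_{j∈N_i} d_{ij} = D_i for every i, and Σ_{j∈N_i} d_{ji} = r*_i for every i, and furthermore every node gives only to its neighbors of smallest sharing ratio: whenever d_{ij} > 0, it holds that ρ_j(r*) = min_{k∈N_i} ρ_k(r*). -/
open Finset
open scoped Classical

noncomputable section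

namespace SharingEcon

variable {V : Type*} [Fintype V] [DecidableEq V]

/-- The set of neighbors of a set of nodes: `N_S = ⋃ i ∈ S, N_i`. -/
def nbrs (G : SimpleGraph V) [DecidableRel G.Adj] (S : Finset V) : Finset V :=
  S.biUnion fun i => G.neighborFinset i

/-- The set function `f(S) = ∑_{j ∈ N_S} D_j`. -/
def fS (G : SimpleGraph V) [DecidableRel G.Adj] (D : V → ℝ) (S : Finset V) : ℝ :=
  ∑ j ∈ nbrs G S, D j

/-- The polymatroid polyhedron `A` of a set function `f`. -/
def polyA (f : Finset V → ℝ) : Set (V → ℝ) :=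
  {r | (∀ i, 0 ≤ r i) ∧ ∀ S : Finset V, ∑ i ∈ S, r i ≤ f S}

/-- The base `A₀` of the polymatroid. -/
def polyBase (f : Finset V → ℝ) : Set (V → ℝ) :=
  {r | r ∈ polyA f ∧ ∑ i, r i = f Finset.univ}

/-- The coordinates of a vector sorted in nondecreasing order. -/
def sortedVec (x : V → ℝ) : List ℝ :=
  (Finset.univ.val.map x).sort (· ≤ ·)

/-- `x` is lexicographically at least `y` (comparing sorted coordinate vectors). -/
def lexGE (x y : V → ℝ) : Prop :=
  sortedVec x = sortedVec y ∨
    ∃ k : ℕ, (∀ j < k, (sortedVec x).getD j 0 = (sortedVec y).getD j 0) ∧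
      (sortedVec y).getD k 0 < (sortedVec x).getD k 0

/-- `r` is lexicographically optimal in `A` for the sharing-ratio vectors `(r i / D i)`. -/
def LexOptimal (A : Set (V → ℝ)) (D : V → ℝ) (r : V → ℝ) : Prop :=
  r ∈ A ∧ ∀ r' ∈ A, lexGE (fun i => r i / D i) (fun i => r' i / D i)

/-- The sharing ratio of node `i`. -/
def ratio (D r : V → ℝ) (i : V) : ℝ := r i / D i

/-- The distinct values of the sharing ratios, sorted increasingly. -/
def vals (D r : V → ℝ) : List ℝ :=
  (Finset.univ.image (ratio D r)).sort (· ≤ ·)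

/-- The number `K(r)` of distinct sharing-ratio values. -/
def numLevels (D r : V → ℝ) : ℕ := (vals D r).length

/-- The `k`-th smallest distinct ratio value `v_k(r)` (1-indexed). -/
def v (D r : V → ℝ) (k : ℕ) : ℝ := (vals D r).getD (k - 1) 0

/-- The `k`-th level set `L_k(r)` (1-indexed). -/
def level (D r : V → ℝ) (k : ℕ) : Finset V :=
  Finset.univ.filter fun i => ratio D r i = v D r k

end SharingEcon

/-!
Compactness gives an allocation `d` (nonnegative, supported on edges, row sums at most `D`)
that maximizes the total amount given among those whose column sums stay below `r*`. If a column
`j₀` were short, let `T` be the set of columns reachable from `j₀` by alternating steps `j ⟶ j'`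
(a neighbour of `j` gives to `j'`). A donor adjacent to `T` with spare endowment would let us
reroute along such a path and give more, so all donors in `N_T` are saturated and give only
into `T`; then `f(T) < ∑_{j ∈ T} r*_j`, contradicting `r* ∈ A`. Hence `r*` is the column-sum
vector of an allocation. The column sums of every allocation lie in `A`, so the two remaining
claims follow by perturbing `d` slightly: a node keeping part of its endowment could give a little
more to a neighbour, and a node giving to `j` while some neighbour `j'` has a smaller ratio could
shift a little from `j` to `j'`. Either change makes the sorted ratio vector lexicographically
larger.
-/

open Filter Topology

theorem tendsto_add_mul_nhdsGT_zero (a b : ℝ) :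
    Tendsto (fun δ : ℝ => a + δ * b) (𝓝[>] 0) (𝓝 a) :=
  ((continuous_const.add (continuous_id.mul continuous_const)).tendsto' 0 a (by simp)).mono_left
    nhdsWithin_le_nhds

namespace List

theorem lt_of_cons_ne_of_filter_lt_eq {a h h' : ℝ} {L M : List ℝ}
    (hL : (h :: L).Pairwise (· ≤ ·)) (hM : (h' :: M).Pairwise (· ≤ ·))
    (hf : (h :: L).filter (· < a) = (h' :: M).filter (· < a)) (ha : a ∈ h :: L) (hne : h ≠ h') :
    h < h' := by
  have hmin : ∀ x ∈ h :: L, h ≤ x := forall_mem_cons.2 ⟨le_rfl, (pairwise_cons.1 hL).1⟩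
  have hmin' : ∀ x ∈ h' :: M, h' ≤ x :=
    forall_mem_cons.2 ⟨le_rfl, (pairwise_cons.1 hM).1⟩
  have hmem : ∀ x < a, (x ∈ h :: L ↔ x ∈ h' :: M) := fun x hx => by
    simpa [hx] using congrArg (x ∈ ·) hf
  have hah : a ≤ h := by
    by_contra! hh
    have hh' := hmin' h ((hmem h hh).1 mem_cons_self)
    exact hne (le_antisymm (hmin h' ((hmem h' (hh'.trans_lt hh)).2 mem_cons_self)) hh')
  have hah' : a ≤ h' := by
    by_contra! hh'
    exact hh'.not_ge (hah.trans (hmin h' ((hmem h' hh').2 mem_cons_self)))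
  exact ((le_antisymm (hmin a ha) hah).trans_le hah').lt_of_ne hne

theorem exists_getD_lt_of_filter_lt_eq_of_count_lt (a : ℝ) :
    ∀ {L M : List ℝ}, L.Pairwise (· ≤ ·) → M.Pairwise (· ≤ ·) → L.length = M.length →
      L.filter (· < a) = M.filter (· < a) → M.count a < L.count a →
      ∃ p, (∀ j < p, L.getD j 0 = M.getD j 0) ∧ L.getD p 0 < M.getD p 0
  | [], _, _, _, _, _, hc => by simp at hc
  | _ :: _, [], _, _, hlen, _, _ => by simp at hlen
  | h :: L, h' :: M, hL, hM, hlen, hf, hc => by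
    obtain rfl | hne := eq_or_ne h h'
    · have hf' : L.filter (· < a) = M.filter (· < a) := by
        by_cases hha : h < a <;> simpa [filter_cons, hha] using hf
      have hc' : M.count a < L.count a := by
        simpa [count_cons] using hc
      obtain ⟨p, hpre, hlt⟩ := exists_getD_lt_of_filter_lt_eq_of_count_lt a
        (pairwise_cons.1 hL).2 (pairwise_cons.1 hM).2 (by simpa using hlen) hf' hc'
      refine ⟨p + 1, fun j hj => ?_, by simpa using hlt⟩
      cases j with
      | zero => rfl
      | succ j => simpa using hpre j (by omega)
    · refine ⟨0, by simp, ?_⟩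
      simpa using lt_of_cons_ne_of_filter_lt_eq hL hM hf (count_pos_iff.1 (by omega)) hne

end List

namespace SharingEcon

section Lex

variable {V : Type*} [Fintype V]

theorem not_lexGE_of_filter_eq_of_count_lt {x y : V → ℝ} {a : ℝ}
    (hf : (univ.val.map x).filter (· < a) = (univ.val.map y).filter (· < a))
    (hc : (univ.val.map y).count a < (univ.val.map x).count a) : ¬ lexGE x y := by
  have hsort : ∀ z : V → ℝ, (sortedVec z : Multiset ℝ) = univ.val.map z := fun z =>
    Multiset.sort_eq _ _
  have hpw : ∀ z : V → ℝ, (sortedVec z).Pairwise (· ≤ ·) := fun z => Multiset.pairwise_sort _ _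
  have hlen : (sortedVec x).length = (sortedVec y).length := by
    simp [sortedVec]
  have hfil : (sortedVec x).filter (· < a) = (sortedVec y).filter (· < a) := by
    refine List.Perm.eq_of_pairwise' ((hpw x).filter _) ((hpw y).filter _)
      (Multiset.coe_eq_coe.1 ?_)
    simpa [← Multiset.filter_coe, hsort] using hf
  have hcnt : (sortedVec y).count a < (sortedVec x).count a := by
    simpa [← Multiset.coe_count, hsort] using hc
  obtain ⟨p, hpre, hlt⟩ :=
    List.exists_getD_lt_of_filter_lt_eq_of_count_lt a (hpw x) (hpw y) hlen hfil hcnt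
  rintro (heq | ⟨k, hkpre, hklt⟩)
  · exact hlt.ne (by rw [heq])
  · rcases lt_trichotomy k p with hkp | rfl | hpk
    · exact hklt.ne' (hpre k hkp)
    · exact hlt.not_gt hklt
    · exact hlt.ne (hkpre p hpk)

theorem not_lexGE_of_forall_ne {x y : V → ℝ} (i : V) (hi : x i ≠ y i)
    (h : ∀ k, x k ≠ y k → x i ≤ x k ∧ x i < y k) : ¬ lexGE x y := by
  refine not_lexGE_of_filter_eq_of_count_lt (a := x i) ?_ ?_
  · rw [Multiset.filter_map, Multiset.filter_map]
    have hfil : univ.val.filter ((· < x i) ∘ x) = univ.val.filter ((· < x i) ∘ y) :=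
      Multiset.filter_congr fun k _ => by
        by_cases hk : x k = y k
        · simp [hk]
        · simp [(h k hk).1.not_gt, (h k hk).2.not_gt]
    rw [hfil]
    refine Multiset.map_congr rfl fun k hk => ?_
    replace hk : y k < x i := (Multiset.mem_filter.1 hk).2
    by_contra hne
    exact (h k hne).2.not_gt hk
  · have hsub : univ.filter (fun k => x i = y k) ⊂ univ.filter (fun k => x i = x k) := by
      refine Finset.ssubset_iff_of_subset (fun k => ?_) |>.2 ⟨i, by simp [hi]⟩
      simp only [Finset.mem_filter, Finset.mem_univ, true_and]
      intro hk
      by_contra hne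
      exact (h k fun hxy => hne (hk.trans hxy.symm)).2.ne hk
    simpa [Multiset.count_map, ← Finset.filter_val] using Finset.card_lt_card hsub

end Lex

section Direction

variable {V : Type*} {G : SimpleGraph V} {d F F' : V → V → ℝ}

variable (G) in
structure IsFeasibleDirection (d F : V → V → ℝ) : Prop where
  nonneg_of_eq_zero : ∀ i j, d i j = 0 → 0 ≤ F i j
  eq_zero_of_not_adj : ∀ i j, ¬ G.Adj i j → F i j = 0

theorem IsFeasibleDirection.add (hF : IsFeasibleDirection G d F)
    (hF' : IsFeasibleDirection G d F') : IsFeasibleDirection G d (F + F') :=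
  ⟨fun i j h => add_nonneg (hF.1 i j h) (hF'.1 i j h),
    fun i j h => by simp [hF.2 i j h, hF'.2 i j h]⟩

theorem isFeasibleDirection_single [DecidableEq V] {i : V} {g : V → ℝ}
    (hnn : ∀ j, d i j = 0 → 0 ≤ g j) (hadj : ∀ j, ¬ G.Adj i j → g j = 0) :
    IsFeasibleDirection G d (Pi.single i g) := by
  constructor <;> intro a b <;> obtain rfl | ha := eq_or_ne a i <;> simp_all

theorem isFeasibleDirection_single_single [DecidableEq V] {p q : V} (hpq : G.Adj p q) :
    IsFeasibleDirection G d (Pi.single p (Pi.single q 1)) :=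
  isFeasibleDirection_single (fun b _ => by simp [Pi.single_apply, apply_ite]) fun b hb => by
    have : b ≠ q := by rintro rfl; exact hb hpq
    simp [this]

end Direction

section Allocation

variable {V : Type*} [Fintype V] {G : SimpleGraph V} {D r : V → ℝ} {d F : V → V → ℝ}

theorem sum_single_apply [DecidableEq V] (i b : V) (g : V → ℝ) :
    ∑ a, (Pi.single i g : V → V → ℝ) a b = g b := by
  simp [← Finset.sum_apply]

theorem sum_apply_single [DecidableEq V] (i a : V) (g : V → ℝ) :
    ∑ b, (Pi.single i g : V → V → ℝ) a b = (Pi.single i (∑ b, g b) : V → ℝ) a := by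
  obtain rfl | ha := eq_or_ne a i <;> simp_all

theorem sum_add_smul_apply (δ : ℝ) (b : V) :
    ∑ a, (d + δ • F) a b = ∑ a, d a b + δ * ∑ a, F a b := by
  simp [Finset.sum_add_distrib, Finset.mul_sum]

theorem sum_apply_add_smul (δ : ℝ) (a : V) :
    ∑ b, (d + δ • F) a b = ∑ b, d a b + δ * ∑ b, F a b := by
  simp [Finset.sum_add_distrib, Finset.mul_sum]

variable (G D) in
structure IsAllocation (d : V → V → ℝ) : Prop where
  nonneg : ∀ i j, 0 ≤ d i j
  eq_zero_of_not_adj : ∀ i j, ¬ G.Adj i j → d i j = 0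
  sum_le : ∀ i, ∑ j, d i j ≤ D i

theorem IsAllocation.adj_of_pos (hd : IsAllocation G D d) {i j : V} (h : 0 < d i j) :
    G.Adj i j :=
  not_not.1 fun hij => h.ne' (hd.eq_zero_of_not_adj i j hij)

theorem IsAllocation.eventually_add_smul (hd : IsAllocation G D d)
    (hF : IsFeasibleDirection G d F) (hrow : ∀ i, ∑ j, d i j = D i → ∑ j, F i j ≤ 0) :
    ∀ᶠ δ in 𝓝[>] (0 : ℝ), IsAllocation G D (d + δ • F) := by
  have hnn : ∀ i j, ∀ᶠ δ in 𝓝[>] (0 : ℝ), 0 ≤ d i j + δ * F i j := by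
    intro i j
    rcases (hd.nonneg i j).eq_or_lt with h | h
    · filter_upwards [self_mem_nhdsWithin] with δ (hδ : 0 < δ)
      rw [← h, zero_add]
      exact mul_nonneg hδ.le (hF.nonneg_of_eq_zero i j h.symm)
    · exact ((tendsto_add_mul_nhdsGT_zero _ _).eventually_const_lt h).mono fun _ => le_of_lt
  have hsum : ∀ i, ∀ᶠ δ in 𝓝[>] (0 : ℝ), ∑ j, d i j + δ * ∑ j, F i j ≤ D i := by
    intro i
    rcases (hd.sum_le i).eq_or_lt with h | h
    · filter_upwards [self_mem_nhdsWithin] with δ (hδ : 0 < δ)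
      nlinarith [hrow i h]
    · exact ((tendsto_add_mul_nhdsGT_zero _ _).eventually_lt_const h).mono fun _ => le_of_lt
  filter_upwards [eventually_all.2 fun i => eventually_all.2 (hnn i), eventually_all.2 hsum]
    with δ hnn hsum
  refine ⟨hnn, fun i j hij => ?_, fun i => ?_⟩
  · simp [hd.eq_zero_of_not_adj i j hij, hF.eq_zero_of_not_adj i j hij]
  · simpa only [sum_apply_add_smul] using hsum i

theorem IsAllocation.sum_neighborFinset_row [DecidableRel G.Adj] (hd : IsAllocation G D d)
    (i : V) :
    ∑ j ∈ G.neighborFinset i, d i j = ∑ j, d i j :=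
  sum_subset (subset_univ _) fun j _ hj =>
    hd.eq_zero_of_not_adj i j fun h => hj ((G.mem_neighborFinset i j).2 h)

theorem IsAllocation.sum_neighborFinset_col [DecidableRel G.Adj] (hd : IsAllocation G D d)
    (i : V) :
    ∑ j ∈ G.neighborFinset i, d j i = ∑ j, d j i :=
  sum_subset (subset_univ _) fun j _ hj =>
    hd.eq_zero_of_not_adj j i fun h => hj ((G.mem_neighborFinset i j).2 h.symm)

variable (G D r) in
def allocationsBelow : Set (V → V → ℝ) := {d | IsAllocation G D d ∧ ∀ j, ∑ i, d i j ≤ r j}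

theorem isCompact_allocationsBelow (G : SimpleGraph V) (D r : V → ℝ) :
    IsCompact (allocationsBelow G D r) := by
  have hclosed : IsClosed (allocationsBelow G D r) := by
    have : allocationsBelow G D r = (⋂ i, ⋂ j, {d | 0 ≤ d i j}) ∩
        (⋂ i, ⋂ j, {d | ¬ G.Adj i j → d i j = 0}) ∩ (⋂ i, {d | ∑ j, d i j ≤ D i}) ∩
        ⋂ j, {d | ∑ i, d i j ≤ r j} := by
      ext d
      simp only [allocationsBelow, Set.mem_ofPred_eq, Set.mem_inter_iff, Set.mem_iInter]
      exact ⟨fun ⟨⟨h₁, h₂, h₃⟩, h₄⟩ => ⟨⟨⟨h₁, h₂⟩, h₃⟩, h₄⟩,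
        fun ⟨⟨⟨h₁, h₂⟩, h₃⟩, h₄⟩ => ⟨⟨h₁, h₂, h₃⟩, h₄⟩⟩
    rw [this]
    refine .inter (.inter (.inter ?_ ?_) ?_) ?_
    · exact isClosed_iInter fun i => isClosed_iInter fun j =>
        isClosed_le continuous_const (continuous_apply_apply i j)
    · refine isClosed_iInter fun i => isClosed_iInter fun j => ?_
      by_cases h : G.Adj i j
      · simp [h]
      · simpa [h] using isClosed_eq (continuous_apply_apply i j) continuous_const
    · exact isClosed_iInter fun i => isClosed_le
        (continuous_finsetSum _ fun j _ => continuous_apply_apply i j) continuous_const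
    · exact isClosed_iInter fun j => isClosed_le
        (continuous_finsetSum _ fun i _ => continuous_apply_apply i j) continuous_const
  refine (isCompact_Icc (a := 0) (b := fun i _ => D i)).of_isClosed_subset hclosed
    fun d ⟨hd, _⟩ => ⟨fun i j => hd.nonneg i j, fun i j => ?_⟩
  exact (Finset.single_le_sum (fun k _ => hd.nonneg i k) (mem_univ j)).trans (hd.sum_le i)

variable [DecidableEq V] [DecidableRel G.Adj]

@[simp]
theorem mem_nbrs {S : Finset V} {i : V} : i ∈ nbrs G S ↔ ∃ j ∈ S, G.Adj j i := by
  simp [nbrs]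

theorem IsAllocation.sum_sum_eq_sum_nbrs (hd : IsAllocation G D d) (S : Finset V) :
    ∑ j ∈ S, ∑ i, d i j = ∑ i ∈ nbrs G S, ∑ j ∈ S, d i j := by
  rw [Finset.sum_comm]
  refine (Finset.sum_subset (subset_univ _) fun i _ hi => Finset.sum_eq_zero fun j hj => ?_).symm
  by_contra h
  exact hi (mem_nbrs.2 ⟨j, hj, (hd.adj_of_pos ((hd.nonneg i j).lt_of_ne' h)).symm⟩)

theorem IsAllocation.colSum_mem_polyA (hd : IsAllocation G D d) :
    (fun j => ∑ i, d i j) ∈ polyA (fS G D) := by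
  refine ⟨fun j => Finset.sum_nonneg fun i _ => hd.nonneg i j, fun S => ?_⟩
  rw [hd.sum_sum_eq_sum_nbrs, fS]
  exact Finset.sum_le_sum fun i _ => (Finset.sum_le_sum_of_subset_of_nonneg (subset_univ S)
    fun j _ _ => hd.nonneg i j).trans (hd.sum_le i)

end Allocation

section Existence

variable {V : Type*} [Fintype V] [DecidableEq V] {G : SimpleGraph V} {D r : V → ℝ}
  {d : V → V → ℝ}

variable (G) in
def Redirect (d : V → V → ℝ) (j j' : V) : Prop := ∃ i, G.Adj i j ∧ 0 < d i j'

theorem IsAllocation.exists_direction_of_reflTransGen (hd : IsAllocation G D d) {j₀ j : V}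
    (h : Relation.ReflTransGen (Redirect G d) j₀ j) :
    ∃ E, IsFeasibleDirection G d E ∧ (∀ a, ∑ b, E a b = 0) ∧
      ∀ b, ∑ a, E a b = (Pi.single j₀ 1 - Pi.single j 1 : V → ℝ) b := by
  induction h with
  | refl => exact ⟨0, ⟨by simp, by simp⟩, by simp, by simp⟩
  | @tail j j' _ hstep ih =>
    obtain ⟨i, hij, hij'⟩ := hstep
    obtain ⟨E, hE, hrow, hcol⟩ := ih
    refine ⟨E + Pi.single i (Pi.single j 1 - Pi.single j' 1), hE.add
      (isFeasibleDirection_single (fun b hb => ?_) fun b hb => ?_), fun a => ?_, fun b => ?_⟩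
    · obtain rfl | hb' := eq_or_ne b j'
      · exact absurd hb hij'.ne'
      · simp [Pi.single_apply, hb', apply_ite]
    · have hbj : b ≠ j := by rintro rfl; exact hb hij
      have hbj' : b ≠ j' := by rintro rfl; exact hb (hd.adj_of_pos hij')
      simp [hbj, hbj']
    · simp [Finset.sum_add_distrib, hrow, sum_apply_single]
    · simp [Finset.sum_add_distrib, hcol, sum_single_apply]

theorem sum_eq_of_isMaxOn (hd : d ∈ allocationsBelow G D r)
    (hmax : IsMaxOn (fun d : V → V → ℝ => ∑ i, ∑ j, d i j) (allocationsBelow G D r) d)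
    {j₀ p q : V} (hj₀ : ∑ i, d i j₀ < r j₀) (hq : Relation.ReflTransGen (Redirect G d) j₀ q)
    (hpq : G.Adj p q) : ∑ j, d p j = D p := by
  refine (hd.1.sum_le p).eq_of_not_lt fun hp => ?_
  obtain ⟨E, hE, hErow, hEcol⟩ := hd.1.exists_direction_of_reflTransGen hq
  set F := E + Pi.single p (Pi.single q 1)
  have hF : IsFeasibleDirection G d F := hE.add (isFeasibleDirection_single_single hpq)
  have hFrow : ∀ a, ∑ b, F a b = (Pi.single p 1 : V → ℝ) a := by
    simp [F, Finset.sum_add_distrib, hErow, sum_apply_single]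
  have hFcol : ∀ b, ∑ a, F a b = (Pi.single j₀ 1 : V → ℝ) b := by
    simp [F, Finset.sum_add_distrib, hEcol, sum_single_apply]
  have hcol : ∀ b, ∀ᶠ δ in 𝓝[>] (0 : ℝ), ∑ a, (d + δ • F) a b ≤ r b := by
    intro b
    simp only [sum_add_smul_apply, hFcol]
    obtain rfl | hb := eq_or_ne b j₀
    · simpa using ((tendsto_add_mul_nhdsGT_zero _ 1).eventually_lt_const hj₀).mono
        fun _ => le_of_lt
    · simpa [hb] using hd.2 b
  have hrow : ∀ a, ∑ b, d a b = D a → ∑ b, F a b ≤ 0 := fun a ha => by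
    obtain rfl | hap := eq_or_ne a p
    · exact absurd ha hp.ne
    · simp [hFrow, hap]
  obtain ⟨δ, ⟨hδd, hδr⟩, hδ⟩ :=
    (((hd.1.eventually_add_smul hF hrow).and (eventually_all.2 hcol)).and
      self_mem_nhdsWithin).exists
  have htotal : ∑ a, ∑ b, (d + δ • F) a b = ∑ a, ∑ b, d a b + δ := by
    simp only [sum_apply_add_smul, hFrow, Finset.sum_add_distrib, ← Finset.mul_sum]
    simp
  have := hmax ⟨hδd, hδr⟩
  simp only [Set.mem_ofPred_eq, htotal] at this
  linarith [(hδ : 0 < δ)]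

theorem exists_allocation_of_mem_polyA [DecidableRel G.Adj] (hD : ∀ i, 0 ≤ D i)
    (hr : r ∈ polyA (fS G D)) : ∃ d, IsAllocation G D d ∧ ∀ j, ∑ i, d i j = r j := by
  obtain ⟨d, hd, hmax⟩ := (isCompact_allocationsBelow G D r).exists_isMaxOn
    ⟨0, ⟨fun _ _ => le_rfl, fun _ _ _ => rfl, by simpa using hD⟩, by simpa using hr.1⟩
    (continuous_finsetSum _ fun i _ => continuous_finsetSum _ fun j _ =>
      continuous_apply_apply (ρ := fun _ _ => ℝ) i j).continuousOn
  refine ⟨d, hd.1, fun j₀ => (hd.2 j₀).eq_of_not_lt fun hj₀ => ?_⟩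
  set T := univ.filter (Relation.ReflTransGen (Redirect G d) j₀)
  have hsat : ∀ i ∈ nbrs G T, ∑ j, d i j = D i := fun i hi => by
    obtain ⟨q, hq, hqi⟩ := mem_nbrs.1 hi
    exact sum_eq_of_isMaxOn hd hmax hj₀ (mem_filter.1 hq).2 hqi.symm
  have hclosed : ∀ i ∈ nbrs G T, ∑ j ∈ T, d i j = ∑ j, d i j := fun i hi => by
    obtain ⟨q, hq, hqi⟩ := mem_nbrs.1 hi
    refine sum_subset (subset_univ T) fun j _ hj => ?_
    by_contra h
    exact hj (mem_filter.2 ⟨mem_univ j,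
      (mem_filter.1 hq).2.tail ⟨i, hqi.symm, (hd.1.nonneg i j).lt_of_ne' h⟩⟩)
  have hcut : fS G D T < ∑ j ∈ T, r j := calc
    fS G D T = ∑ i ∈ nbrs G T, ∑ j ∈ T, d i j :=
      sum_congr rfl fun i hi => by rw [hclosed i hi, hsat i hi]
    _ = ∑ j ∈ T, ∑ i, d i j := (hd.1.sum_sum_eq_sum_nbrs T).symm
    _ < ∑ j ∈ T, r j :=
      sum_lt_sum (fun j _ => hd.2 j) ⟨j₀, mem_filter.2 ⟨mem_univ _, .refl⟩, hj₀⟩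
  exact hcut.not_ge (hr.2 T)

end Existence

section Equilibrium

variable {V : Type*} [Fintype V] [DecidableEq V] {G : SimpleGraph V} [DecidableRel G.Adj]
  {D r : V → ℝ} {d : V → V → ℝ}

theorem LexOptimal.sum_row_eq (hlex : LexOptimal (polyA (fS G D)) D r) (hD : ∀ i, 0 < D i)
    (hniso : ∀ i, (G.neighborFinset i).Nonempty) (hd : IsAllocation G D d)
    (hcol : ∀ j, ∑ i, d i j = r j) (p : V) : ∑ j, d p j = D p := by
  refine (hd.sum_le p).eq_of_not_lt fun hp => ?_
  obtain ⟨q, hq⟩ := hniso p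
  have hrow : ∀ a, ∑ b, d a b = D a →
      ∑ b, (Pi.single p (Pi.single q 1) : V → V → ℝ) a b ≤ 0 := fun a ha => by
    obtain rfl | hap := eq_or_ne a p
    · exact absurd ha hp.ne
    · simp [hap]
  obtain ⟨δ, hδd, hδ : 0 < δ⟩ := ((hd.eventually_add_smul
    (isFeasibleDirection_single_single ((G.mem_neighborFinset p q).1 hq)) hrow).and
      self_mem_nhdsWithin).exists
  have hge := hlex.2 _ hδd.colSum_mem_polyA
  simp only [sum_add_smul_apply, sum_single_apply, hcol] at hge
  have hlt : r q / D q < (r q + δ) / D q := div_lt_div_of_pos_right (by linarith) (hD q)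
  refine not_lexGE_of_forall_ne q (by simpa using hlt.ne) (fun k hk => ?_) hge
  obtain rfl | hkq := eq_or_ne k q
  · simpa using hlt
  · simp [hkq] at hk

theorem LexOptimal.ratio_eq_inf'_of_pos (hlex : LexOptimal (polyA (fS G D)) D r) (hD : ∀ i, 0 < D i)
    (hniso : ∀ i, (G.neighborFinset i).Nonempty) (hd : IsAllocation G D d)
    (hcol : ∀ j, ∑ i, d i j = r j) {i j : V} (hij : 0 < d i j) :
    ratio D r j = (G.neighborFinset i).inf' (hniso i) (ratio D r) := by
  obtain ⟨j', hj', hmin⟩ := exists_mem_eq_inf' (hniso i) (ratio D r)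
  rw [hmin]
  refine le_antisymm (not_lt.1 fun hlt => ?_)
    (hmin ▸ inf'_le _ ((G.mem_neighborFinset i j).2 (hd.adj_of_pos hij)))
  have hjj' : j' ≠ j := by rintro rfl; exact hlt.false
  set F : V → V → ℝ := Pi.single i (Pi.single j' 1 - Pi.single j 1)
  have hF : IsFeasibleDirection G d F := isFeasibleDirection_single
    (fun b hb => by
      have : b ≠ j := by rintro rfl; exact hij.ne' hb
      simp [this, Pi.single_apply, apply_ite])
    fun b hb => by
      have hbj : b ≠ j := by rintro rfl; exact hb (hd.adj_of_pos hij)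
      have hbj' : b ≠ j' := by rintro rfl; exact hb ((G.mem_neighborFinset i b).1 hj')
      simp [hbj, hbj']
  have hrow : ∀ a, ∑ b, F a b = 0 := by simp [F, sum_apply_single]
  obtain ⟨δ, ⟨hδd, hδj⟩, hδ : 0 < δ⟩ :=
    (((hd.eventually_add_smul hF fun a _ => (hrow a).le).and
      (((tendsto_add_mul_nhdsGT_zero (r j) (-1)).div_const (D j)).eventually_const_lt hlt)).and
        self_mem_nhdsWithin).exists
  have hge := hlex.2 _ hδd.colSum_mem_polyA
  simp only [F, sum_add_smul_apply, sum_single_apply, hcol] at hge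
  have hlt' : r j' / D j' < (r j' + δ) / D j' := div_lt_div_of_pos_right (by linarith) (hD j')
  refine not_lexGE_of_forall_ne j' (by simpa [hjj'] using hlt'.ne) (fun k hk => ?_) hge
  obtain rfl | hkj' := eq_or_ne k j'
  · simpa [hjj'] using hlt'
  obtain rfl | hkj := eq_or_ne k j
  · exact ⟨hlt.le, by simpa [ratio, hkj'] using hδj⟩
  · simp [hkj, hkj'] at hk

end Equilibrium

theorem lexopt_is_sharing_equilibrium_general {V : Type*} [Fintype V] [DecidableEq V]
    (G : SimpleGraph V) [DecidableRel G.Adj]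
    (hniso : ∀ i, (G.neighborFinset i).Nonempty)
    (D : V → ℝ) (hD : ∀ i, 0 < D i)
    (rstar : V → ℝ) (hlex : LexOptimal (polyA (fS G D)) D rstar) :
    ∃ d : V → V → ℝ,
      (∀ i j, 0 ≤ d i j) ∧
      (∀ i j, ¬ G.Adj i j → d i j = 0) ∧
      (∀ i, ∑ j ∈ G.neighborFinset i, d i j = D i) ∧
      (∀ i, ∑ j ∈ G.neighborFinset i, d j i = rstar i) ∧
      (∀ i j, 0 < d i j →
        ratio D rstar j = (G.neighborFinset i).inf' (hniso i) (ratio D rstar)) := by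
  obtain ⟨d, hd, hcol⟩ := exists_allocation_of_mem_polyA (fun i => (hD i).le) hlex.1
  refine ⟨d, hd.nonneg, hd.eq_zero_of_not_adj, fun i => ?_, fun i => ?_,
    fun i j hij => hlex.ratio_eq_inf'_of_pos hD hniso hd hcol hij⟩
  · rw [hd.sum_neighborFinset_row, hlex.sum_row_eq hD hniso hd hcol i]
  · rw [hd.sum_neighborFinset_col, hcol]

/-- lex-optimal ratios are sharing-equilibrium ratios: there is an allocation
generating `r*` in which every node distributes its whole endowment, and gives only to
neighbors of smallest sharing ratio. -/
theorem lexopt_is_sharing_equilibrium {V : Type*} [Fintype V] [DecidableEq V]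
    (G : SimpleGraph V) [DecidableRel G.Adj]
    (hconn : G.Connected) (hniso : ∀ i, (G.neighborFinset i).Nonempty)
    (D : V → ℝ) (hD : ∀ i, 0 < D i)
    (rstar : V → ℝ) (hlex : LexOptimal (polyA (fS G D)) D rstar) :
    ∃ d : V → V → ℝ,
      (∀ i j, 0 ≤ d i j) ∧
      (∀ i j, ¬ G.Adj i j → d i j = 0) ∧
      (∀ i, ∑ j ∈ G.neighborFinset i, d i j = D i) ∧
      (∀ i, ∑ j ∈ G.neighborFinset i, d j i = rstar i) ∧
      (∀ i j, 0 < d i j →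
        ratio D rstar j = (G.neighborFinset i).inf' (hniso i) (ratio D rstar)) :=
  lexopt_is_sharing_equilibrium_general G hniso D hD rstar hlex

end SharingEcon
end
end

section
/- Second Lyapunov inequality: let r* ∈ A be lex-optimal and let J ∈ A_0 (i.e., J ≥ 0, Σ_{i∈S} J_i ≤ f(S) for all S ⊆ N, and Σ_{i∈N} J_i = f(N)). Then Σ_{i∈N} (1/D_i) r*_i (J_i − r*_i) ≥ 0. -/
/-!
For a lex-optimal `r`, every node `i₀` lies in a tight set (`∑ i ∈ S, r i = f S`) whose nodes all
have ratio `r j / D j ≤ r i₀ / D i₀`: otherwise a little mass can be moved from the nodes of larger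
ratio to `i₀` without leaving `A`, which improves `r` lexicographically. Tight sets are closed under
union because `f` is submodular, so every sublevel set `{i | r i / D i < t}` is tight, and so is
`N`. Hence `z = J - r` has nonpositive sum over each sublevel set of the ratio and total sum zero,
and summation by parts over the levels gives `∑ i, (r i / D i) * z i ≥ 0`.
-/

open Finset
open scoped Classical

noncomputable section

theorem List.Pairwise.lt_countP_le_iff {α : Type*} [LinearOrder α] {l : List α}
    (hl : l.Pairwise (· ≤ ·)) {k : ℕ} (hk : k < l.length) (t : α) :
    k < l.countP (· ≤ t) ↔ l[k] ≤ t := by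
  induction l generalizing k with
  | nil => simp at hk
  | cons a l ih =>
    rw [List.pairwise_cons] at hl
    by_cases hat : a ≤ t
    · rw [List.countP_cons, if_pos (by simpa using hat)]
      cases k with
      | zero => simpa using hat
      | succ k => simpa using ih hl.2 (by simpa using hk)
    · have hl0 : l.countP (· ≤ t) = 0 := List.countP_eq_zero.2 fun b hb => by
        simpa using fun h => hat ((hl.1 b hb).trans h)
      have hk' : ¬ (a :: l)[k] ≤ t := by
        cases k with
        | zero => simpa using hat
        | succ k => exact fun h => hat ((hl.1 _ (List.getElem_mem _)).trans (by simpa using h))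
      simp [hl0, hat, hk']

theorem Finset.mul_sum_le_sum_mul_of_sum_sublevel_nonpos {ι : Type*} (γ z : ι → ℝ)
    (s : Finset ι) (hz : ∀ t, ∑ i ∈ s with γ i < t, z i ≤ 0) {c : ℝ}
    (hc : ∀ i ∈ s, γ i ≤ c) : c * ∑ i ∈ s, z i ≤ ∑ i ∈ s, γ i * z i := by
  induction s using Finset.strongInduction generalizing c with
  | H s ih =>
  rcases s.eq_empty_or_nonempty with rfl | hs
  · simp
  obtain ⟨m, hm, hmax⟩ := s.exists_max_image γ hs
  have ih' := ih {i ∈ s | γ i < γ m} (filter_ssubset.2 ⟨m, hm, lt_irrefl _⟩)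
    (fun t => by
      rw [filter_filter]
      convert hz (min t (γ m)) using 3
      simp only [lt_min_iff, and_comm])
    (c := γ m) fun i hi => (mem_filter.1 hi).2.le
  have htop : ∑ i ∈ s with ¬ γ i < γ m, γ i * z i = γ m * ∑ i ∈ s with ¬ γ i < γ m, z i := by
    rw [mul_sum]
    refine sum_congr rfl fun i hi => ?_
    rw [mem_filter, not_lt] at hi
    rw [le_antisymm (hmax i hi.1) hi.2]
  have hsum : ∑ i ∈ s, z i ≤ 0 := by
    simpa [filter_true_of_mem fun i hi => (hc i hi).trans_lt (lt_add_one c)] using hz (c + 1)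
  calc c * ∑ i ∈ s, z i ≤ γ m * ∑ i ∈ s, z i := mul_le_mul_of_nonpos_right (hc m hm) hsum
    _ = γ m * ∑ i ∈ s with γ i < γ m, z i + γ m * ∑ i ∈ s with ¬ γ i < γ m, z i := by
      rw [← mul_add, sum_filter_add_sum_filter_not]
    _ ≤ ∑ i ∈ s with γ i < γ m, γ i * z i + ∑ i ∈ s with ¬ γ i < γ m, γ i * z i := by
      rw [htop]
      linarith
    _ = ∑ i ∈ s, γ i * z i := sum_filter_add_sum_filter_not _ _ _

namespace SharingEcon

open Filter Topology

section Lex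

variable {V : Type*} [Fintype V]

theorem length_sortedVec (x : V → ℝ) : (sortedVec x).length = Fintype.card V := by
  rw [sortedVec, Multiset.length_sort, Multiset.card_map]
  rfl

theorem pairwise_sortedVec (x : V → ℝ) : (sortedVec x).Pairwise (· ≤ ·) :=
  Multiset.pairwise_sort _ _

theorem countP_sortedVec (x : V → ℝ) (t : ℝ) :
    (sortedVec x).countP (· ≤ t) = #{i | x i ≤ t} := by
  rw [← Multiset.coe_countP, sortedVec, Multiset.sort_eq, Multiset.countP_map]
  rfl

theorem not_lexGE_of_card_le {x y : V → ℝ} {a : ℝ} (hlt : #{i | y i ≤ a} < #{i | x i ≤ a})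
    (hmono : ∀ t ≤ a, #{i | y i ≤ t} ≤ #{i | x i ≤ t}) : ¬ lexGE x y := by
  rintro (heq | ⟨k, hpre, hk⟩)
  · have := countP_sortedVec x a
    rw [heq, countP_sortedVec] at this
    omega
  set l := sortedVec x
  set l' := sortedVec y
  have hl : l.Pairwise (· ≤ ·) := pairwise_sortedVec x
  have hl' : l'.Pairwise (· ≤ ·) := pairwise_sortedVec y
  have hlen : l.length = l'.length := by rw [length_sortedVec, length_sortedVec]
  have hkl : k < l.length := by
    by_contra! h
    rw [List.getD_eq_default _ _ h, List.getD_eq_default _ _ (hlen ▸ h)] at hk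
    exact lt_irrefl _ hk
  rw [List.getD_eq_getElem _ _ hkl, List.getD_eq_getElem _ _ (hlen ▸ hkl)] at hk
  set t := l'[k]
  have hxt : #{i | x i ≤ t} ≤ k := by
    rw [← countP_sortedVec, ← not_lt, hl.lt_countP_le_iff hkl]
    exact not_le.2 hk
  have hyt : k < #{i | y i ≤ t} := by
    rw [← countP_sortedVec]
    exact (hl'.lt_countP_le_iff (hlen ▸ hkl) t).2 le_rfl
  have hat : a < t := not_le.1 fun h => by linarith [hmono t h]
  -- The largest index `m - 1` with `l[m - 1] ≤ a` lies in the common prefix of `l` and `l'`.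
  set m := #{i | x i ≤ a}
  have hml : m - 1 < l.length := by
    have h₁ : m ≤ Fintype.card V := card_le_univ _
    have h₂ : l.length = Fintype.card V := length_sortedVec x
    omega
  have hma : l[m - 1] ≤ a := by
    rw [← hl.lt_countP_le_iff hml, countP_sortedVec]
    omega
  have hmk : m - 1 < k := by
    have := (hl.lt_countP_le_iff hml t).2 (hma.trans hat.le)
    rw [countP_sortedVec] at this
    omega
  have hma' : l'[m - 1] ≤ a := by
    have := hpre (m - 1) hmk
    rw [List.getD_eq_getElem _ _ hml, List.getD_eq_getElem _ _ (hlen ▸ hml)] at this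
    rwa [← this]
  have := (hl'.lt_countP_le_iff (hlen ▸ hml) a).2 hma'
  rw [countP_sortedVec] at this
  omega

theorem not_lexGE_of_lt_of_forall_le {x y : V → ℝ} {i₀ : V} (hi₀ : x i₀ < y i₀)
    (hxy : ∀ i, y i ≤ x i₀ → x i ≤ y i) : ¬ lexGE x y := by
  have hsub : ∀ t ≤ x i₀, ({i | y i ≤ t} : Finset V) ⊆ ({i | x i ≤ t} : Finset V) :=
    fun t ht i hi => by
      simp only [mem_filter, mem_univ, true_and] at hi ⊢
      exact (hxy i (hi.trans ht)).trans hi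
  refine not_lexGE_of_card_le (a := x i₀) (card_lt_card ?_) fun t ht => card_le_card (hsub t ht)
  exact (ssubset_iff_of_subset (hsub _ le_rfl)).2 ⟨i₀, by simp, by simp [hi₀]⟩

end Lex

section Polymatroid

variable {V : Type*}

def IsSubmodular [DecidableEq V] (f : Finset V → ℝ) : Prop :=
  ∀ S T, f (S ∪ T) + f (S ∩ T) ≤ f S + f T

def IsTight (f : Finset V → ℝ) (r : V → ℝ) (S : Finset V) : Prop :=
  ∑ i ∈ S, r i = f S

theorem IsTight.union [DecidableEq V] {f : Finset V → ℝ} (hf : IsSubmodular f) {r : V → ℝ}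
    (hr : r ∈ polyA f) {S T : Finset V} (hS : IsTight f r S) (hT : IsTight f r T) :
    IsTight f r (S ∪ T) := by
  unfold IsTight at *
  linarith [sum_union_inter (s₁ := S) (s₂ := T) (f := r), hr.2 (S ∪ T), hr.2 (S ∩ T), hf S T]

theorem isTight_of_forall_exists_subset [DecidableEq V] {f : Finset V → ℝ} (hf : IsSubmodular f)
    (hf₀ : f ∅ = 0) {r : V → ℝ} (hr : r ∈ polyA f) {W : Finset V}
    (h : ∀ i ∈ W, ∃ S ⊆ W, i ∈ S ∧ IsTight f r S) : IsTight f r W := by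
  choose! S hSW hiS hS using h
  have hW : W.sup S = W :=
    le_antisymm (Finset.sup_le hSW) fun i hi => Finset.le_sup (f := S) hi (hiS i hi)
  rw [← hW]
  exact Finset.sup_induction (by simp [IsTight, hf₀]) (fun _ h₁ _ h₂ => h₁.union hf hr h₂) hS

theorem eventually_add_mul_le {a b c : ℝ} (h : a ≤ c) (hb : a = c → b ≤ 0) :
    ∀ᶠ δ in 𝓝[>] 0, a + δ * b ≤ c := by
  rcases h.lt_or_eq with h | h
  · have : Tendsto (fun δ => a + δ * b) (𝓝[>] 0) (𝓝 a) :=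
      (Continuous.tendsto' (by fun_prop) 0 a (by simp)).mono_left nhdsWithin_le_nhds
    exact (this.eventually_lt_const h).mono fun _ => le_of_lt
  · filter_upwards [self_mem_nhdsWithin] with δ (hδ : 0 < δ)
    nlinarith [hb h]

theorem eventually_add_smul_mem_polyA [Fintype V] {f : Finset V → ℝ} {r d : V → ℝ}
    (hr : r ∈ polyA f) (hd : ∀ i, r i = 0 → 0 ≤ d i)
    (hdS : ∀ S, IsTight f r S → ∑ i ∈ S, d i ≤ 0) :
    ∀ᶠ δ in 𝓝[>] (0 : ℝ), r + δ • d ∈ polyA f := by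
  simp only [polyA, Set.mem_ofPred_eq, Pi.add_apply, Pi.smul_apply, smul_eq_mul,
    sum_add_distrib, ← mul_sum]
  refine (eventually_all.2 fun i => ?_).and
    (eventually_all.2 fun S => eventually_add_mul_le (hr.2 S) (hdS S))
  filter_upwards [eventually_add_mul_le (neg_nonpos.2 (hr.1 i))
    fun h => neg_nonpos.2 (hd i (neg_eq_zero.1 h))] with δ hδ
  linarith

theorem eventually_shift_mem_polyA [Fintype V] [DecidableEq V] {f : Finset V → ℝ} {r : V → ℝ}
    (hr : r ∈ polyA f) {i₀ : V} {U : Finset V} (hU : ∀ j ∈ U, 0 < r j)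
    (hS : ∀ S, i₀ ∈ S → IsTight f r S → ∃ j ∈ S, j ∈ U) :
    ∀ᶠ δ in 𝓝[>] (0 : ℝ),
      r + δ • (fun i => (if i = i₀ then 1 else 0) - if i ∈ U then 1 else 0) ∈ polyA f := by
  refine eventually_add_smul_mem_polyA hr (fun i hi => ?_) fun S hS' => ?_
  · have hiU : i ∉ U := fun hiU => (hU i hiU).ne' hi
    simp only [if_neg hiU]
    split_ifs <;> norm_num
  · simp only [sum_sub_distrib, sum_ite_eq', sum_boole]
    split_ifs with hi₀S
    · obtain ⟨j, hjS, hjU⟩ := hS S hi₀S hS'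
      have : (1 : ℝ) ≤ #{x ∈ S | x ∈ U} := by
        exact_mod_cast card_pos.2 ⟨j, mem_filter.2 ⟨hjS, hjU⟩⟩
      linarith
    · simp

end Polymatroid

section LexOptimal

variable {V : Type*} [Fintype V] {f : Finset V → ℝ} {D r : V → ℝ}

theorem LexOptimal.exists_isTight_ratio_le [DecidableEq V] (hD : ∀ i, 0 < D i)
    (hr : LexOptimal (polyA f) D r) (i₀ : V) :
    ∃ S, i₀ ∈ S ∧ IsTight f r S ∧ ∀ j ∈ S, ratio D r j ≤ ratio D r i₀ := by
  by_contra! h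
  set U : Finset V := {j | ratio D r i₀ < ratio D r j}
  set d : V → ℝ := fun i => (if i = i₀ then 1 else 0) - if i ∈ U then 1 else 0
  have hUpos : ∀ j ∈ U, 0 < r j := fun j hj => by
    have hj : r i₀ / D i₀ < r j / D j := (mem_filter.1 hj).2
    have := div_nonneg (hr.1.1 i₀) (hD i₀).le
    exact (div_pos_iff_of_pos_right (hD j)).1 (by linarith)
  have hfeas : ∀ᶠ δ in 𝓝[>] (0 : ℝ), r + δ • d ∈ polyA f :=
    eventually_shift_mem_polyA hr.1 hUpos fun S hi₀S hS =>
      let ⟨j, hjS, hj⟩ := h S hi₀S hS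
      ⟨j, hjS, mem_filter.2 ⟨mem_univ j, hj⟩⟩
  have hU : ∀ᶠ δ in 𝓝[>] (0 : ℝ), ∀ j ∈ U, ratio D r i₀ < (r + δ • d) j / D j := by
    refine (eventually_all_finset U).2 fun j hj => ?_
    have : Tendsto (fun δ : ℝ => (r + δ • d) j / D j) (𝓝[>] 0) (𝓝 (ratio D r j)) :=
      (Continuous.tendsto' (by simp only [Pi.add_apply, Pi.smul_apply, smul_eq_mul]; fun_prop)
        0 _ (by simp [ratio])).mono_left nhdsWithin_le_nhds
    exact this.eventually_const_lt (mem_filter.1 hj).2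
  obtain ⟨δ, hδA, hδU, hδ : 0 < δ⟩ := (hfeas.and (hU.and self_mem_nhdsWithin)).exists
  have hd₀ : d i₀ = 1 := by simp [d, U]
  refine not_lexGE_of_lt_of_forall_le (i₀ := i₀) ?_ (fun i hi => ?_) (hr.2 _ hδA)
  · simp only [Pi.add_apply, Pi.smul_apply, smul_eq_mul, hd₀, mul_one]
    exact div_lt_div_of_pos_right (by linarith) (hD i₀)
  · by_cases hiU : i ∈ U
    · exact absurd hi (not_le.2 (hδU i hiU))
    have hi₀ : i ≠ i₀ := by
      rintro rfl
      simp only [Pi.add_apply, Pi.smul_apply, smul_eq_mul, hd₀, mul_one] at hi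
      exact absurd hi (not_le.2 (div_lt_div_of_pos_right (by linarith) (hD i)))
    simp [d, hiU, hi₀]

theorem LexOptimal.isTight [DecidableEq V] (hf : IsSubmodular f) (hf₀ : f ∅ = 0)
    (hD : ∀ i, 0 < D i) (hr : LexOptimal (polyA f) D r) {W : Finset V}
    (hW : ∀ i ∈ W, ∀ j, ratio D r j ≤ ratio D r i → j ∈ W) : IsTight f r W :=
  isTight_of_forall_exists_subset hf hf₀ hr.1 fun i hi =>
    let ⟨S, hiS, hS, hle⟩ := hr.exists_isTight_ratio_le hD i
    ⟨S, fun j hj => hW i hi j (hle j hj), hiS, hS⟩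

theorem LexOptimal.sum_ratio_mul_sub_nonneg [DecidableEq V] (hf : IsSubmodular f)
    (hf₀ : f ∅ = 0) (hD : ∀ i, 0 < D i) (hr : LexOptimal (polyA f) D r) {J : V → ℝ}
    (hJ : J ∈ polyBase f) : 0 ≤ ∑ i, ratio D r i * (J i - r i) := by
  have hsub : ∀ t, ∑ i with ratio D r i < t, (J i - r i) ≤ 0 := fun t => by
    have hT : IsTight f r {i | ratio D r i < t} :=
      hr.isTight hf hf₀ hD fun i hi j hj => by simpa using hj.trans_lt (by simpa using hi)
    rw [sum_sub_distrib, hT]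
    linarith [hJ.1.2 {i | ratio D r i < t}]
  have htot : ∑ i, (J i - r i) = 0 := by
    have hT : IsTight f r univ := hr.isTight hf hf₀ hD fun _ _ j _ => mem_univ j
    rw [sum_sub_distrib, hJ.2, hT, sub_self]
  obtain ⟨c, hc⟩ := (Set.finite_range (ratio D r)).bddAbove
  simpa [htot] using
    mul_sum_le_sum_mul_of_sum_sublevel_nonpos _ _ univ hsub (c := c) fun i _ => hc ⟨i, rfl⟩

end LexOptimal

section Graph

variable {V : Type*} [Fintype V] [DecidableEq V] (G : SimpleGraph V) [DecidableRel G.Adj]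

theorem fS_empty (D : V → ℝ) : fS G D ∅ = 0 := by
  simp [fS, nbrs]

theorem isSubmodular_fS {D : V → ℝ} (hD : ∀ i, 0 ≤ D i) : IsSubmodular (fS G D) := by
  intro S T
  have hinter : nbrs G (S ∩ T) ⊆ nbrs G S ∩ nbrs G T :=
    subset_inter (biUnion_subset_biUnion_of_subset_left _ inter_subset_left)
      (biUnion_subset_biUnion_of_subset_left _ inter_subset_right)
  calc fS G D (S ∪ T) + fS G D (S ∩ T)
      ≤ ∑ j ∈ nbrs G S ∪ nbrs G T, D j + ∑ j ∈ nbrs G S ∩ nbrs G T, D j := by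
        rw [fS, nbrs, union_biUnion]
        exact add_le_add le_rfl (sum_le_sum_of_subset_of_nonneg hinter fun i _ _ => hD i)
    _ = fS G D S + fS G D T := sum_union_inter

end Graph

theorem lyapunov_second_inequality_general {V : Type*} [Fintype V] [DecidableEq V]
    (G : SimpleGraph V) [DecidableRel G.Adj]
    (D : V → ℝ) (hD : ∀ i, 0 < D i)
    (rstar : V → ℝ) (hlex : LexOptimal (polyA (fS G D)) D rstar)
    (J : V → ℝ) (hJ : J ∈ polyBase (fS G D)) :
    0 ≤ ∑ i, (1 / D i) * rstar i * (J i - rstar i) := by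
  convert hlex.sum_ratio_mul_sub_nonneg (isSubmodular_fS G fun i => (hD i).le) (fS_empty G D)
    hD hJ using 2 with i
  rw [ratio]
  ring

/-- second Lyapunov inequality: if `r*` is lex-optimal and `J ∈ A₀`, then
`Σ_i (1/D_i) r*_i (J_i − r*_i) ≥ 0`. -/
theorem lyapunov_second_inequality {V : Type*} [Fintype V] [DecidableEq V]
    (G : SimpleGraph V) [DecidableRel G.Adj]
    (hconn : G.Connected) (hniso : ∀ i, (G.neighborFinset i).Nonempty)
    (D : V → ℝ) (hD : ∀ i, 0 < D i)
    (rstar : V → ℝ) (hlex : LexOptimal (polyA (fS G D)) D rstar)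
    (J : V → ℝ) (hJ : J ∈ polyBase (fS G D)) :
    0 ≤ ∑ i, (1 / D i) * rstar i * (J i - rstar i) :=
  lyapunov_second_inequality_general G D hD rstar hlex J hJ

end SharingEcon
end
end
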